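/- arXiv:math/9910101 — 2 statements merged into one kernel-verified Lean document; each statement's English description precedes it below -/
import Mathlib

section
/- Let G be a finite group, n ≥ 1, H_1, …, H_n subgroups of G, and χ the character of an irreducible complex representation of G of dimension d. Then Σ over all tuples (x_1, …, x_n, z_1, …, z_n) with x_j ∈ G and z_j ∈ H_j of χ(x_1 z_1 x_1^{-1} · x_2 z_2 x_2^{-1} ··· x_n z_n x_n^{-1}) equals |G|^n · (∏_{j=1}^n Σ_{z ∈ H_j} χ(z)) / d^{n-1}. -/
/-!
For each `j`, the operator `∑_{x ∈ G, z ∈ H_j} ρ(x z x⁻¹)` commutes with `ρ`, so by Schur's lemma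
it is the scalar `|G| (∑_{z ∈ H_j} χ(z)) / d`, read off from its trace. Expanding the product of
these `n` operators shows that the sum in question is the trace of that product, i.e. `d` times
the product of the scalars.
-/

open CategoryTheory
open scoped Classical

theorem List.prod_ofFn_sum {R : Type*} [Semiring R] {n : ℕ} {κ : Fin n → Type*}
    [∀ i, Fintype (κ i)] (f : ∀ i, κ i → R) :
    (List.ofFn fun i => ∑ k, f i k).prod =
      ∑ p : ∀ i, κ i, (List.ofFn fun i => f i (p i)).prod := by
  induction n with
  | zero => simp
  | succ n ih =>
    rw [List.ofFn_succ, List.prod_cons, ih, Finset.sum_mul_sum,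
      ← (Fin.consEquiv κ).sum_comp, Fintype.sum_prod_type]
    simp [List.ofFn_succ, Fin.consEquiv_apply]

theorem List.prod_ofFn_smul_one {R A : Type*} [CommSemiring R] [Semiring A] [Algebra R A]
    {n : ℕ} (c : Fin n → R) : (List.ofFn fun j => c j • (1 : A)).prod = (∏ j, c j) • 1 := by
  have hc : (fun j => c j • (1 : A)) = algebraMap R A ∘ c :=
    funext fun j => (Algebra.algebraMap_eq_smul_one (c j)).symm
  rw [hc, ← List.map_ofFn, ← map_list_prod, List.prod_ofFn, Algebra.algebraMap_eq_smul_one]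

namespace FDRep

variable {k : Type*} [Field k] {G : Type*} [Group G]

theorem natCast_finrank_ne_zero [CharZero k] (V : FDRep k G) [Simple V] :
    (Module.finrank k V : k) ≠ 0 := by
  have : Nontrivial V := by
    by_contra h
    rw [not_nontrivial_iff_subsingleton] at h
    exact id_nonzero V (by ext v; exact Subsingleton.elim _ _)
  exact Nat.cast_ne_zero.2 Module.finrank_pos.ne'

theorem exists_eq_smul_one_of_commute [IsAlgClosed k] (V : FDRep k G) [Simple V]
    (f : Module.End k V) (hf : ∀ g, f * V.ρ g = V.ρ g * f) : ∃ c : k, f = c • 1 := by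
  let φ : V ⟶ V :=
    { hom := InducedCategory.homMk (ModuleCat.ofHom f)
      comm := fun g => by ext v; exact LinearMap.congr_fun (hf g) v }
  obtain ⟨c, hc⟩ := endomorphism_simple_eq_smul_id k φ
  exact ⟨c, (congrArg (fun ψ : V ⟶ V => ψ.hom.hom.hom) hc).symm⟩

theorem eq_trace_div_finrank_smul_one [IsAlgClosed k] [CharZero k] (V : FDRep k G) [Simple V]
    (f : Module.End k V) (hf : ∀ g, f * V.ρ g = V.ρ g * f) :
    f = (LinearMap.trace k V f / Module.finrank k V) • 1 := by
  obtain ⟨c, rfl⟩ := exists_eq_smul_one_of_commute V f hf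
  rw [map_smul, Module.End.one_eq_id, LinearMap.trace_id, smul_eq_mul,
    mul_div_cancel_right₀ _ (natCast_finrank_ne_zero V)]

theorem sum_ρ_conj_eq_smul_one [Fintype G] [IsAlgClosed k] [CharZero k] (V : FDRep k G)
    [Simple V] {ι : Type*} [Fintype ι] (a : ι → G) :
    ∑ x, ∑ i, V.ρ (x * a i * x⁻¹) =
      ((Fintype.card G * ∑ i, V.character (a i)) / Module.finrank k V) • 1 := by
  have hcomm : ∀ g, (∑ x, ∑ i, V.ρ (x * a i * x⁻¹)) * V.ρ g =
      V.ρ g * ∑ x, ∑ i, V.ρ (x * a i * x⁻¹) := by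
    intro g
    simp only [Finset.sum_mul, Finset.mul_sum, ← map_mul]
    refine Fintype.sum_equiv (Equiv.mulLeft g⁻¹) _ _ fun x => Finset.sum_congr rfl fun i _ => ?_
    simp only [Equiv.coe_mulLeft]
    congr 1
    group
  rw [eq_trace_div_finrank_smul_one V _ hcomm]
  congr 3
  simp only [map_sum]
  change ∑ x, ∑ i, V.character (x * a i * x⁻¹) = _
  simp only [char_conj, Finset.sum_const, Finset.card_univ, nsmul_eq_mul]

end FDRep

theorem character_subgroup_conjugate_product_sum_general {G : Type} [Group G] [Fintype G]
    (V : FDRep ℂ G) (hV : Simple V) (n : ℕ) (H : Fin n → Subgroup G) :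
    (∑ x : Fin n → G, ∑ z : (∀ j, H j),
        V.character (List.ofFn fun j => x j * (z j : G) * (x j)⁻¹).prod) =
      (Fintype.card G : ℂ) ^ n * (∏ j, ∑ z : H j, V.character (z : G)) /
        V.character 1 ^ ((n : ℤ) - 1) := by
  have hfactor : ∑ x : Fin n → G, ∑ z : (∀ j, H j),
      V.ρ (List.ofFn fun j => x j * (z j : G) * (x j)⁻¹).prod =
        (List.ofFn fun j => ∑ y, ∑ w : H j, V.ρ (y * w * y⁻¹)).prod := by
    simp_rw [map_list_prod, List.map_ofFn, Function.comp_def, List.prod_ofFn_sum]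
  calc _ = LinearMap.trace ℂ V (∑ x : Fin n → G, ∑ z : (∀ j, H j),
        V.ρ (List.ofFn fun j => x j * (z j : G) * (x j)⁻¹).prod) := by
          simp only [map_sum, FDRep.character]
    _ = (∏ j, (Fintype.card G * ∑ z : H j, V.character z) / Module.finrank ℂ V) *
          Module.finrank ℂ V := by
      simp_rw [hfactor, FDRep.sum_ρ_conj_eq_smul_one V, List.prod_ofFn_smul_one, map_smul,
        Module.End.one_eq_id, LinearMap.trace_id, smul_eq_mul]
    _ = _ := by
      rw [FDRep.char_one, Finset.prod_div_distrib, Finset.prod_mul_distrib, Finset.prod_const,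
        Finset.prod_const, Finset.card_univ, Fintype.card_fin,
        zpow_sub_one₀ (FDRep.natCast_finrank_ne_zero V), zpow_natCast]
      field_simp

/-- For an irreducible complex character χ of a finite group G with dimension d = χ(e),
subgroups H₁, …, Hₙ of G (n ≥ 1), the sum over all tuples (x₁, …, xₙ, z₁, …, zₙ) with
xⱼ ∈ G, zⱼ ∈ Hⱼ of χ(x₁ z₁ x₁⁻¹ ⋯ xₙ zₙ xₙ⁻¹) equals |G|ⁿ (∏ⱼ Σ_{z ∈ Hⱼ} χ(z)) / d^{n-1}. -/
theorem character_subgroup_conjugate_product_sum {G : Type} [Group G] [Fintype G]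
    (V : FDRep ℂ G) (hV : Simple V) (n : ℕ) (hn : 1 ≤ n) (H : Fin n → Subgroup G) :
    (∑ x : Fin n → G, ∑ z : (∀ j, H j),
        V.character (List.ofFn fun j => x j * (z j : G) * (x j)⁻¹).prod) =
      (Fintype.card G : ℂ) ^ n * (∏ j, ∑ z : H j, V.character (z : G)) /
        V.character 1 ^ ((n : ℤ) - 1) :=
  character_subgroup_conjugate_product_sum_general V hV n H
end

section
/- Let G be a finite group, g ≥ 0 and n ≥ 0 integers, c_1, …, c_n ∈ G, and χ the character of an irreducible complex representation of G of dimension d. Then Σ over all tuples (x_1, y_1, …, x_g, y_g, z_1, …, z_n) with x_j, y_j ∈ G and z_j in the conjugacy class O_{c_j} of χ([x_1,y_1]···[x_g,y_g] z_1 ··· z_n) equals |G|^{2g} · (∏_{j=1}^n |O_{c_j}|) · (∏_{j=1}^n χ(c_j)) / d^{2g+n-1}. -/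
/-!
By Schur's lemma an endomorphism `T` of an irreducible `V` commuting with the action is a scalar,
namely `tr T / d`, so `tr (T ρ(b)) = tr T · χ(b) / d`. Taking for `T` the class sum of `cⱼ`
removes `zⱼ` at the cost of the factor `|O_{cⱼ}| χ(cⱼ) / d`. Taking `T = ∑ₓ ρ(x y x⁻¹)` and then
`T = ∑_y χ(y) ρ(y⁻¹)`, whose trace is `|G|` by orthonormality of `χ`, shows that summing
`χ([x, y] t)` over `x, y` multiplies `χ(t)` by `(|G| / d)²`. Peeling off all factors leaves
`χ(e) = d`.
-/

open CategoryTheory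
open scoped Classical
open scoped commutatorElement

theorem Fintype.sum_pi_ofFn_prod_mul {M R : Type*} [Monoid M] [CommSemiring R] (F : M → R) :
    ∀ {n : ℕ} {ι : Fin n → Type*} [∀ i, Fintype (ι i)] (f : ∀ i, ι i → M) (r : Fin n → R),
    (∀ i t, ∑ a, F (f i a * t) = r i * F t) → ∀ t,
    ∑ a : ∀ i, ι i, F ((List.ofFn fun i => f i (a i)).prod * t) = (∏ i, r i) * F t
  | 0, _, _, _, _, _, t => by simp
  | n + 1, ι, _, f, r, h, t => by
    rw [← (Fin.consEquiv ι).sum_comp, Fintype.sum_prod_type, Finset.sum_comm]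
    simp only [Fin.consEquiv_apply, List.ofFn_succ, Fin.cons_zero, Fin.cons_succ, List.prod_cons,
      mul_assoc, h 0]
    rw [← Finset.mul_sum, Fintype.sum_pi_ofFn_prod_mul F (fun i => f i.succ) (fun i => r i.succ)
      (fun i => h i.succ), Fin.prod_univ_succ, mul_assoc]

namespace FDRep

variable {k : Type*} [Field k] {G : Type*} [Group G] (V : FDRep k G) [Simple V]

theorem character_one_ne_zero [CharZero k] : V.character 1 ≠ 0 := by
  rw [char_one, Nat.cast_ne_zero, Ne, Module.finrank_zero_iff]
  intro hsub
  refine id_nonzero V (Action.hom_ext _ _ (InducedCategory.hom_ext ?_))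
  ext v
  exact Subsingleton.elim (α := V) _ _

theorem character_one_mul_trace_mul_of_commute [IsAlgClosed k] (T : Module.End k V)
    (hT : ∀ g, Commute (V.ρ g) T) (b : G) :
    V.character 1 * LinearMap.trace k V (T * V.ρ b) = LinearMap.trace k V T * V.character b := by
  let f : V ⟶ V := ⟨⟨ConcreteCategory.ofHom T⟩, fun g => by ext v; exact congr($((hT g).symm) v)⟩
  obtain ⟨c, hc⟩ := endomorphism_simple_eq_smul_id k f
  have hTc : T = c • 1 := (congrArg (fun φ : V ⟶ V => φ.hom.hom.hom) hc).symm
  simp only [hTc, smul_mul_assoc, one_mul, map_smul, smul_eq_mul, character, map_one,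
    LinearMap.trace_one]
  ring

theorem sum_mul_character_mul [IsAlgClosed k] [CharZero k] {ι : Type*} [Fintype ι]
    (w : ι → k) (u : ι → G)
    (hconj : ∀ g, ∃ σ : ι ≃ ι, ∀ i, u (σ i) = g * u i * g⁻¹ ∧ w (σ i) = w i) (b : G) :
    ∑ i, w i * V.character (u i * b) =
      (∑ i, w i * V.character (u i)) * V.character b / V.character 1 := by
  set T : Module.End k V := ∑ i, w i • V.ρ (u i)
  have hT : ∀ g, Commute (V.ρ g) T := by
    intro g
    obtain ⟨σ, hσ⟩ := hconj g
    have hσT : ∀ i, V.ρ g * (w i • V.ρ (u i)) = (w (σ i) • V.ρ (u (σ i))) * V.ρ g := by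
      intro i
      rw [(hσ i).1, (hσ i).2, mul_smul_comm, smul_mul_assoc, ← map_mul, ← map_mul,
        inv_mul_cancel_right]
    simp only [Commute, SemiconjBy, T, Finset.mul_sum, Finset.sum_mul, hσT]
    exact σ.sum_comp (fun i => w i • V.ρ (u i) * V.ρ g)
  have htrace_mul : LinearMap.trace k V (T * V.ρ b) = ∑ i, w i * V.character (u i * b) := by
    simp [T, Finset.sum_mul, character]
  have htrace : LinearMap.trace k V T = ∑ i, w i * V.character (u i) := by
    simp [T, character]
  rw [← htrace_mul, ← htrace, eq_div_iff (character_one_ne_zero V), mul_comm,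
    character_one_mul_trace_mul_of_commute V T hT]

theorem sum_character_mul [IsAlgClosed k] [CharZero k] {ι : Type*} [Fintype ι] (u : ι → G)
    (hconj : ∀ g, ∃ σ : ι ≃ ι, ∀ i, u (σ i) = g * u i * g⁻¹) (b : G) :
    ∑ i, V.character (u i * b) = (∑ i, V.character (u i)) * V.character b / V.character 1 := by
  simpa only [one_mul] using sum_mul_character_mul V (fun _ => 1) u
    (fun g => (hconj g).imp fun _ hσ i => ⟨hσ i, rfl⟩) b

variable [IsAlgClosed k] [CharZero k] [Fintype G]

theorem sum_character_conjugatesOf_mul (a t : G) :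
    ∑ z : conjugatesOf a, V.character (z * t) =
      Nat.card (conjugatesOf a) * V.character a / V.character 1 * V.character t := by
  have hconj (g : G) : ∃ σ : conjugatesOf a ≃ conjugatesOf a, ∀ z, (σ z : G) = g * z * g⁻¹ :=
    have hc (z : G) : IsConj z (g * z * g⁻¹) := isConj_iff.2 ⟨g, rfl⟩
    ⟨(MulAut.conj g).toEquiv.subtypeEquiv fun z => ⟨(·.trans (hc z)), (·.trans (hc z).symm)⟩,
      fun _ => rfl⟩
  have hχ (z : conjugatesOf a) : V.character z = V.character a := by
    obtain ⟨g, hg⟩ := isConj_iff.1 z.2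
    rw [← hg, char_conj]
  rw [div_mul_eq_mul_div, sum_character_mul V Subtype.val hconj]
  simp only [hχ, Finset.sum_const, Finset.card_univ, nsmul_eq_mul, Nat.card_eq_fintype_card]

theorem sum_character_conj_mul (a b : G) :
    ∑ x, V.character (x * a * x⁻¹ * b) =
      Fintype.card G * V.character a * V.character b / V.character 1 := by
  rw [sum_character_mul V (fun x => x * a * x⁻¹)
    (fun g => ⟨Equiv.mulLeft g, fun x => by simp [mul_assoc]⟩) b]
  simp [char_conj]

theorem sum_character_mul_character_inv_mul (t : G) :
    ∑ y, V.character y * V.character (y⁻¹ * t) =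
      Fintype.card G * V.character t / V.character 1 := by
  have h := sum_mul_character_mul V V.character (fun y => y⁻¹)
    (fun g => ⟨(MulAut.conj g).toEquiv, fun y => ⟨by simp [mul_assoc], char_conj V y g⟩⟩) t
  have : Invertible (Nat.card G : k) := invertibleOfNonzero (by simp)
  have horth := scalar_product_char_eq_finrank_equivariant V V
  rw [finrank_hom_simple_simple, if_pos ⟨Iso.refl V⟩] at horth
  have hnorm : ∑ y, V.character y * V.character y⁻¹ = Fintype.card G := by
    simp only [Nat.card_eq_fintype_card, Nat.cast_one] at horth
    exact ((inv_mul_eq_one₀ (by simp)).1 horth).symm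
  rw [h, hnorm]

theorem sum_character_commutator_mul (t : G) :
    ∑ p : G × G, V.character (⁅p.1, p.2⁆ * t) =
      (Fintype.card G / V.character 1) ^ 2 * V.character t := by
  have hcomm (x y : G) : ⁅x, y⁆ * t = x * y * x⁻¹ * (y⁻¹ * t) := by
    rw [commutatorElement_def]; group
  calc ∑ p : G × G, V.character (⁅p.1, p.2⁆ * t)
      = ∑ y, ∑ x, V.character (x * y * x⁻¹ * (y⁻¹ * t)) := by
        rw [Fintype.sum_prod_type, Finset.sum_comm]; simp only [hcomm]
    _ = Fintype.card G / V.character 1 * ∑ y, V.character y * V.character (y⁻¹ * t) := by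
        simp only [sum_character_conj_mul, Finset.mul_sum]
        exact Finset.sum_congr rfl fun y _ => by ring
    _ = (Fintype.card G / V.character 1) ^ 2 * V.character t := by
        rw [sum_character_mul_character_inv_mul]; ring

theorem sum_pi_character_mul_conjugatesOf_prod {n : ℕ} (c : Fin n → G) (t : G) :
    ∑ z : (∀ j, conjugatesOf (c j)), V.character (t * (List.ofFn fun j => (z j : G)).prod) =
      (∏ j, Nat.card (conjugatesOf (c j)) * V.character (c j) / V.character 1) *
        V.character t := by
  simp only [char_mul_comm V _ t]
  exact Fintype.sum_pi_ofFn_prod_mul _ _ _ (fun j => sum_character_conjugatesOf_mul V (c j)) t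

theorem sum_pi_character_commutator_prod_mul (g : ℕ) (t : G) :
    ∑ x : Fin g → G, ∑ y : Fin g → G, V.character ((List.ofFn fun j => ⁅x j, y j⁆).prod * t) =
      ((Fintype.card G / V.character 1) ^ 2) ^ g * V.character t := by
  rw [← Fintype.sum_prod_type', ← (Equiv.arrowProdEquivProdArrow _ _ _).sum_comp, ← Fin.prod_const]
  exact Fintype.sum_pi_ofFn_prod_mul _ (fun _ (p : G × G) => ⁅p.1, p.2⁆) _
    (fun _ => sum_character_commutator_mul V) t

end FDRep

open FDRep in
/-- For an irreducible complex character χ of a finite group G with dimension d = χ(e),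
g, n ≥ 0 and c₁, …, cₙ ∈ G, the sum over all tuples (x₁, y₁, …, x_g, y_g, z₁, …, zₙ) with
xⱼ, yⱼ ∈ G and zⱼ in the conjugacy class O_{cⱼ} of χ([x₁,y₁]⋯[x_g,y_g] z₁ ⋯ zₙ) equals
|G|^{2g} (∏ⱼ |O_{cⱼ}|) (∏ⱼ χ(cⱼ)) / d^{2g+n-1}. -/
theorem character_surface_relation_sum {G : Type} [Group G] [Fintype G]
    (V : FDRep ℂ G) (hV : Simple V) (g n : ℕ) (c : Fin n → G) :
    (∑ x : Fin g → G, ∑ y : Fin g → G, ∑ z : (∀ j, conjugatesOf (c j)),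
        V.character ((List.ofFn fun j => ⁅x j, y j⁆).prod *
          (List.ofFn fun j => (z j : G)).prod)) =
      (Fintype.card G : ℂ) ^ (2 * g) * (∏ j, (Nat.card (conjugatesOf (c j)) : ℂ)) *
        (∏ j, V.character (c j)) / V.character 1 ^ (2 * (g : ℤ) + n - 1) := by
  have hd := character_one_ne_zero V
  have hcomm := sum_pi_character_commutator_prod_mul V g 1
  simp only [mul_one] at hcomm
  have hexp : V.character 1 ^ (2 * (g : ℤ) + n - 1) =
      V.character 1 ^ (2 * g + n) / V.character 1 := by
    rw [show 2 * (g : ℤ) + n - 1 = ((2 * g + n : ℕ) : ℤ) - 1 by push_cast; ring, zpow_sub₀ hd,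
      zpow_natCast, zpow_one]
  simp only [sum_pi_character_mul_conjugatesOf_prod, ← Finset.mul_sum, hcomm, hexp,
    Finset.prod_div_distrib, Finset.prod_mul_distrib, Finset.prod_const, Finset.card_univ,
    Fintype.card_fin, div_pow, ← pow_mul]
  field_simp
  ring
end
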